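/- arXiv:1806.07387 — 5 statements merged into one kernel-verified Lean document; each statement's English description precedes it below -/
import Mathlib

section
/- Let β > 0, μ > 1, f ∈ E_{(β,μ)}, and set φ(m) = i m f(m). Then φ ∈ E_{(β,μ-1)}, and the derivative of the analytic extension of the inverse Fourier transform of f on the strip H_β equals the analytic extension of the inverse Fourier transform of φ: ∂_z F⁻¹(f)(z) = F⁻¹(φ)(z) for all z ∈ H_β. -/
/-!
Multiplying by `i m` costs one power of the polynomial weight, so `φ ∈ E_{(β,μ-1)}`, and since
`μ - 1 > 0` both `f` and `φ` are dominated by `C e^{-β|m|}`, hence integrable. Differentiation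
under the integral sign then gives `(F⁻¹ f)' = F⁻¹ φ` on the real line. A holomorphic extension
`F` of `F⁻¹ f` therefore has `F' = G` on `ℝ`, and the identity theorem on the connected strip
`H_β` extends this equality to all of `H_β`.
-/

open MeasureTheory Real Complex

/-- Membership in the space `E_{(β,μ)}`: continuous functions with finite weighted sup norm. -/
def MemE (β μ : ℝ) (h : ℝ → ℂ) : Prop :=
  Continuous h ∧ BddAbove (Set.range fun m : ℝ =>
    (1 + |m|) ^ μ * Real.exp (β * |m|) * ‖h m‖)

/-- The horizontal strip `H_β`. -/
def Hstrip (β : ℝ) : Set ℂ := {z : ℂ | |z.im| < β}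

/-- The inverse Fourier transform at a real point. -/
noncomputable def invFourier (f : ℝ → ℂ) (x : ℝ) : ℂ :=
  (1 / Real.sqrt (2 * Real.pi)) * ∫ m : ℝ, f m * Complex.exp (Complex.I * x * m)

open Filter Topology

lemma integrable_exp_neg_mul_abs {b : ℝ} (hb : 0 < b) :
    Integrable fun x : ℝ => Real.exp (-(b * |x|)) := by
  rw [← integrableOn_univ, ← @Set.Iio_union_Ici _ _ (0 : ℝ), integrableOn_union,
    integrableOn_Ici_iff_integrableOn_Ioi]
  have hIoi : IntegrableOn (fun x : ℝ => Real.exp (-(b * |x|))) (Set.Ioi 0) := by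
    refine (exp_neg_integrableOn_Ioi 0 hb).congr_fun (fun x hx => ?_) measurableSet_Ioi
    dsimp only
    rw [abs_of_pos hx, neg_mul]
  refine ⟨?_, hIoi⟩
  rw [← (Measure.measurePreserving_neg (volume : Measure ℝ)).integrableOn_comp_preimage
      (Homeomorph.neg ℝ).measurableEmbedding]
  simpa [Function.comp_def, abs_neg] using hIoi

namespace MemE

variable {β μ : ℝ} {h : ℝ → ℂ}

lemma exists_bound (hh : MemE β μ h) :
    ∃ C, ∀ m, (1 + |m|) ^ μ * Real.exp (β * |m|) * ‖h m‖ ≤ C := by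
  obtain ⟨-, C, hC⟩ := hh
  exact ⟨C, fun m => hC ⟨m, rfl⟩⟩

lemma I_mul (hh : MemE β μ h) : MemE β (μ - 1) fun m => I * m * h m := by
  obtain ⟨C, hC⟩ := hh.exists_bound
  refine ⟨by have := hh.1; fun_prop, C, ?_⟩
  rintro _ ⟨m, rfl⟩
  have hpos : 0 < 1 + |m| := by positivity
  have hweight : (1 + |m|) ^ (μ - 1) * |m| ≤ (1 + |m|) ^ μ := calc
    (1 + |m|) ^ (μ - 1) * |m| ≤ (1 + |m|) ^ (μ - 1) * (1 + |m|) := by gcongr; linarith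
    _ = (1 + |m|) ^ μ := by rw [← rpow_add_one hpos.ne', sub_add_cancel]
  calc (1 + |m|) ^ (μ - 1) * Real.exp (β * |m|) * ‖I * m * h m‖
      = (1 + |m|) ^ (μ - 1) * |m| * Real.exp (β * |m|) * ‖h m‖ := by
        simp only [norm_mul, norm_I, norm_real, Real.norm_eq_abs]; ring
    _ ≤ (1 + |m|) ^ μ * Real.exp (β * |m|) * ‖h m‖ := by gcongr
    _ ≤ C := hC m

lemma exists_norm_le_exp (hh : MemE β μ h) (hμ : 0 ≤ μ) :
    ∃ C, ∀ m, ‖h m‖ ≤ C * Real.exp (-(β * |m|)) := by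
  obtain ⟨C, hC⟩ := hh.exists_bound
  refine ⟨C, fun m => ?_⟩
  rw [Real.exp_neg, ← div_eq_mul_inv, le_div_iff₀ (exp_pos _)]
  have hweight : 1 ≤ (1 + |m|) ^ μ := one_le_rpow (by linarith [abs_nonneg m]) hμ
  calc ‖h m‖ * Real.exp (β * |m|) ≤ (1 + |m|) ^ μ * Real.exp (β * |m|) * ‖h m‖ := by
        rw [mul_comm, mul_assoc]
        exact le_mul_of_one_le_left (by positivity) hweight
    _ ≤ C := hC m

lemma integrable (hh : MemE β μ h) (hβ : 0 < β) (hμ : 0 ≤ μ) : Integrable h := by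
  obtain ⟨C, hC⟩ := hh.exists_norm_le_exp hμ
  exact ((integrable_exp_neg_mul_abs hβ).const_mul C).mono' hh.1.aestronglyMeasurable
    (Eventually.of_forall hC)

end MemE

lemma hasDerivAt_invFourier {f : ℝ → ℂ} (hf : Integrable f)
    (hφ : Integrable fun m => I * m * f m) (x : ℝ) :
    HasDerivAt (invFourier f) (invFourier (fun m => I * m * f m) x) x := by
  have hcont (t : ℝ) : Continuous fun m : ℝ => cexp (I * t * m) := by fun_prop
  have hnorm (t m : ℝ) : ‖cexp (I * t * m)‖ = 1 := by
    rw [norm_exp]; simp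
  have hderiv (m t : ℝ) : HasDerivAt (fun t : ℝ => f m * cexp (I * t * m))
      (I * m * f m * cexp (I * t * m)) t := by
    have hlin : HasDerivAt (fun z : ℂ => I * z * m) (I * m) t := by
      simpa using ((hasDerivAt_id (t : ℂ)).const_mul I).mul_const (m : ℂ)
    convert (hlin.cexp.const_mul (f m)).comp_ofReal using 1
    ring
  refine (hasDerivAt_integral_of_dominated_loc_of_deriv_le (bound := fun m => ‖I * m * f m‖)
    univ_mem (Eventually.of_forall fun t => hf.1.mul (hcont t).aestronglyMeasurable)
    (hf.mono (hf.1.mul (hcont x).aestronglyMeasurable) (Eventually.of_forall fun m => ?_))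
    (hφ.1.mul (hcont x).aestronglyMeasurable) (Eventually.of_forall fun m t _ => ?_) hφ.norm
    (Eventually.of_forall fun m t _ => hderiv m t)).2.const_mul _
  · rw [Pi.mul_apply, norm_mul, hnorm, mul_one]
  · rw [norm_mul, hnorm, mul_one]

lemma isOpen_Hstrip (β : ℝ) : IsOpen (Hstrip β) :=
  isOpen_Iio.preimage continuous_im.abs

lemma isPreconnected_Hstrip (β : ℝ) : IsPreconnected (Hstrip β) := by
  have hset : Hstrip β = im ⁻¹' Set.Ioo (-β) β := by
    ext w
    simp [Hstrip, abs_lt]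
  rw [hset]
  exact ((convex_Ioo (-β) β).linear_preimage imLm).isPreconnected

lemma ofReal_mem_Hstrip {β : ℝ} (hβ : 0 < β) (x : ℝ) : (x : ℂ) ∈ Hstrip β := by
  simpa [Hstrip] using hβ

lemma AnalyticOnNhd.eqOn_Hstrip_of_ofReal {E : Type*} [NormedAddCommGroup E] [NormedSpace ℂ E]
    {β : ℝ} (hβ : 0 < β) {f g : ℂ → E} (hf : AnalyticOnNhd ℂ f (Hstrip β))
    (hg : AnalyticOnNhd ℂ g (Hstrip β)) (hfg : ∀ x : ℝ, f x = g x) :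
    Set.EqOn f g (Hstrip β) := by
  have hreal : Tendsto ofReal (𝓝[≠] 0) (𝓝[≠] ((0 : ℝ) : ℂ)) :=
    continuous_ofReal.continuousWithinAt.tendsto_nhdsWithin fun _ _ => by simp_all
  exact hf.eqOn_of_preconnected_of_frequently_eq hg (isPreconnected_Hstrip β)
    (ofReal_mem_Hstrip hβ 0) (hreal.frequently (Frequently.of_forall hfg))

/-- Let `f ∈ E_{(β,μ)}` with `β > 0`, `μ > 1`, and `φ(m) = i m f(m)`. Then
`φ ∈ E_{(β,μ-1)}`, and for any holomorphic extensions `F`, `G` of `F⁻¹(f)`, `F⁻¹(φ)`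
to the strip `H_β`, one has `F' = G` on `H_β`. -/
theorem stmt2 (β μ : ℝ) (hβ : 0 < β) (hμ : 1 < μ) (f : ℝ → ℂ) (hf : MemE β μ f)
    (φ : ℝ → ℂ) (hφdef : ∀ m : ℝ, φ m = Complex.I * m * f m) :
    MemE β (μ - 1) φ ∧
    ∀ F G : ℂ → ℂ,
      DifferentiableOn ℂ F (Hstrip β) → DifferentiableOn ℂ G (Hstrip β) →
      (∀ x : ℝ, F (x : ℂ) = invFourier f x) →
      (∀ x : ℝ, G (x : ℂ) = invFourier φ x) →
      ∀ z ∈ Hstrip β, deriv F z = G z := by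
  obtain rfl : φ = fun m => I * m * f m := funext hφdef
  have hφ : MemE β (μ - 1) fun m => I * m * f m := hf.I_mul
  refine ⟨hφ, fun F G hF hG hFf hGφ => ?_⟩
  have hderiv (x : ℝ) : deriv F x = G x := by
    have hFx : HasDerivAt (fun t : ℝ => F t) (deriv F x) x :=
      (hF.differentiableAt ((isOpen_Hstrip β).mem_nhds (ofReal_mem_Hstrip hβ x))).hasDerivAt
        |>.comp_ofReal
    rw [funext hFf] at hFx
    rw [hGφ, (hasDerivAt_invFourier (hf.integrable hβ (by linarith))
      (hφ.integrable hβ (by linarith)) x).unique hFx]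
  exact ((hF.analyticOnNhd (isOpen_Hstrip β)).deriv).eqOn_Hstrip_of_ofReal hβ
    (hG.analyticOnNhd (isOpen_Hstrip β)) hderiv
end

section
/- Let k ≥ 2 be an integer. There exists a constant j_k > 0 such that for all x ≥ 0, ∫₀ˣ ((x-h)^{1/k}/(1+(x-h)²)) · (h^{1/k}/(1+h²)) · dh/(h(x-h)) ≤ j_k / (x^{1-2/k} (x² + 4)). -/
/-!
With `p = 1 / k` and `w t = t ^ (p - 1) / (1 + t ^ 2)` the integrand is `w (x - h) * w h`.
Since `p ≤ 1`, `w` is decreasing, and for every `h ∈ (0, x)` one of `h`, `x - h` is at least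
`x / 2`; bounding that factor by `w (x / 2)` and the other one by `t ^ (p - 1)` gives
`∫ ≤ w (x / 2) · 2 x ^ p / p`, which is `8 · 2 ^ (1 - p) / (p x ^ (1 - 2p) (x ^ 2 + 4))`.
-/

open MeasureTheory Real Set

noncomputable def powWeight (p t : ℝ) : ℝ := t ^ (p - 1) / (1 + t ^ 2)

section powWeight

variable {p t : ℝ}

lemma measurable_powWeight : Measurable (powWeight p) := by
  unfold powWeight
  fun_prop

lemma powWeight_nonneg (ht : 0 ≤ t) : 0 ≤ powWeight p t := by
  unfold powWeight
  positivity

lemma powWeight_le_rpow (ht : 0 ≤ t) : powWeight p t ≤ t ^ (p - 1) :=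
  div_le_self (rpow_nonneg ht _) (by nlinarith)

lemma powWeight_antitoneOn (hp : p ≤ 1) : AntitoneOn (powWeight p) (Ioi 0) := by
  intro a ha b _ hab
  exact div_le_div₀ (rpow_nonneg ha.le _) (rpow_le_rpow_of_nonpos ha hab (by linarith))
    (by positivity) (by nlinarith [ha.out])

lemma rpow_div_mul_rpow_div_eq_powWeight_mul {a b : ℝ} (ha : 0 < a) (hb : 0 < b) :
    a ^ p / (1 + a ^ 2) * (b ^ p / (1 + b ^ 2)) * (1 / (b * a)) =
      powWeight p a * powWeight p b := by
  unfold powWeight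
  rw [rpow_sub_one ha.ne', rpow_sub_one hb.ne']
  field_simp

lemma powWeight_sub_mul_powWeight_le (hp : p ≤ 1) {x h : ℝ} (hh : 0 < h) (hhx : h < x) :
    powWeight p (x - h) * powWeight p h ≤
      powWeight p (x / 2) * (h ^ (p - 1) + (x - h) ^ (p - 1)) := by
  have hxh : 0 < x - h := by linarith
  have hx2 : (0 : ℝ) < x / 2 := by linarith
  have hw : ∀ t, x / 2 ≤ t → powWeight p t ≤ powWeight p (x / 2) := fun t ht =>
    powWeight_antitoneOn hp (mem_Ioi.2 hx2) (mem_Ioi.2 (hx2.trans_le ht)) ht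
  have hwx := powWeight_nonneg (p := p) hx2.le
  have hph := rpow_nonneg hh.le (p - 1)
  have hpxh := rpow_nonneg hxh.le (p - 1)
  rcases le_or_gt h (x / 2) with hc | hc
  · calc powWeight p (x - h) * powWeight p h ≤ powWeight p (x / 2) * h ^ (p - 1) :=
          mul_le_mul (hw _ (by linarith)) (powWeight_le_rpow hh.le) (powWeight_nonneg hh.le) hwx
      _ ≤ _ := by nlinarith
  · calc powWeight p (x - h) * powWeight p h ≤ (x - h) ^ (p - 1) * powWeight p (x / 2) :=
          mul_le_mul (powWeight_le_rpow hxh.le) (hw _ hc.le) (powWeight_nonneg hh.le) hpxh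
      _ ≤ _ := by nlinarith

end powWeight

section rpowIntegral

variable {p x : ℝ}

lemma intervalIntegrable_rpow_sub_one (hp : 0 < p) :
    IntervalIntegrable (fun t : ℝ => t ^ (p - 1)) volume 0 x :=
  intervalIntegral.intervalIntegrable_rpow' (by linarith)

lemma intervalIntegrable_sub_rpow_sub_one (hp : 0 < p) :
    IntervalIntegrable (fun t : ℝ => (x - t) ^ (p - 1)) volume 0 x := by
  simpa using ((intervalIntegrable_rpow_sub_one (x := x) hp).comp_sub_left x).symm

lemma integral_rpow_sub_one (hp : 0 < p) : ∫ t in (0 : ℝ)..x, t ^ (p - 1) = x ^ p / p := by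
  rw [integral_rpow (Or.inl (by linarith)), zero_rpow (by linarith)]
  simp

lemma integral_sub_rpow_sub_one (hp : 0 < p) :
    ∫ t in (0 : ℝ)..x, (x - t) ^ (p - 1) = x ^ p / p := by
  rw [intervalIntegral.integral_comp_sub_left (fun t => t ^ (p - 1)), sub_self, sub_zero]
  exact integral_rpow_sub_one hp

lemma integrableOn_Ioo_rpow_sub_one_add (hp : 0 < p) (hx : 0 ≤ x) :
    IntegrableOn (fun t : ℝ => t ^ (p - 1) + (x - t) ^ (p - 1)) (Ioo 0 x) :=
  ((intervalIntegrable_iff_integrableOn_Ioo_of_le hx).mp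
    ((intervalIntegrable_rpow_sub_one hp).add (intervalIntegrable_sub_rpow_sub_one hp)))

lemma integral_Ioo_rpow_sub_one_add (hp : 0 < p) (hx : 0 ≤ x) :
    ∫ t in Ioo 0 x, (t ^ (p - 1) + (x - t) ^ (p - 1)) = 2 * x ^ p / p := by
  rw [← integral_Ioc_eq_integral_Ioo, ← intervalIntegral.integral_of_le hx,
    intervalIntegral.integral_add (intervalIntegrable_rpow_sub_one hp)
      (intervalIntegrable_sub_rpow_sub_one hp),
    integral_rpow_sub_one hp, integral_sub_rpow_sub_one hp]
  ring

end rpowIntegral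

lemma integral_powWeight_sub_mul_powWeight_le {p x : ℝ} (hp₀ : 0 < p) (hp₁ : p ≤ 1)
    (hx : 0 ≤ x) :
    ∫ h in Ioo 0 x, powWeight p (x - h) * powWeight p h ≤
      powWeight p (x / 2) * (2 * x ^ p / p) := by
  have hbound := integrableOn_Ioo_rpow_sub_one_add hp₀ hx
  have hle : ∀ h ∈ Ioo 0 x, powWeight p (x - h) * powWeight p h ≤
      powWeight p (x / 2) * (h ^ (p - 1) + (x - h) ^ (p - 1)) :=
    fun h hh => powWeight_sub_mul_powWeight_le hp₁ hh.1 hh.2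
  have hint : IntegrableOn (fun h => powWeight p (x - h) * powWeight p h) (Ioo 0 x) := by
    refine (hbound.const_mul (powWeight p (x / 2))).mono'
      ((measurable_powWeight.comp (measurable_const.sub measurable_id)).mul
        measurable_powWeight).aestronglyMeasurable ?_
    filter_upwards [ae_restrict_mem measurableSet_Ioo] with h hh
    rw [Real.norm_eq_abs, abs_of_nonneg (mul_nonneg (powWeight_nonneg (by linarith [hh.2]))
      (powWeight_nonneg hh.1.le))]
    exact hle h hh
  calc ∫ h in Ioo 0 x, powWeight p (x - h) * powWeight p h
      ≤ ∫ h in Ioo 0 x, powWeight p (x / 2) * (h ^ (p - 1) + (x - h) ^ (p - 1)) :=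
        setIntegral_mono_on hint (hbound.const_mul _) measurableSet_Ioo hle
    _ = powWeight p (x / 2) * (2 * x ^ p / p) := by
        rw [integral_const_mul, integral_Ioo_rpow_sub_one_add hp₀ hx]

lemma powWeight_half_mul_le {p x : ℝ} (hp₀ : 0 < p) (hx : 0 < x) :
    powWeight p (x / 2) * (2 * x ^ p / p) ≤ 16 / p / (x ^ (1 - 2 * p) * (x ^ 2 + 4)) := by
  have hsplit : (x / 2) ^ (p - 1) = x ^ (p - 1) * 2 ^ (1 - p) := by
    rw [div_rpow hx.le zero_le_two, div_eq_mul_inv, ← rpow_neg zero_le_two, neg_sub]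
  have hxx : x ^ p * x ^ (p - 1) * x ^ (1 - 2 * p) = 1 := by
    rw [← rpow_add hx, ← rpow_add hx, show p + (p - 1) + (1 - 2 * p) = 0 by ring, rpow_zero]
  have h2 : (2 : ℝ) ^ (1 - p) ≤ 2 :=
    (rpow_le_rpow_of_exponent_le one_le_two (by linarith)).trans_eq (rpow_one 2)
  calc powWeight p (x / 2) * (2 * x ^ p / p)
        = 8 * 2 ^ (1 - p) / p / (x ^ (1 - 2 * p) * (x ^ 2 + 4)) := by
        unfold powWeight
        rw [hsplit]
        field_simp
        rw [mul_comm p 2]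
        linear_combination (8 * (x ^ 2 + 4)) * hxx
    _ ≤ 16 / p / (x ^ (1 - 2 * p) * (x ^ 2 + 4)) := by gcongr; linarith

/-- For every integer `k ≥ 2` there exists `j_k > 0` such that for all `x ≥ 0`,
`∫₀ˣ ((x-h)^{1/k}/(1+(x-h)²)) (h^{1/k}/(1+h²)) dh/(h(x-h)) ≤ j_k/(x^{1-2/k}(x²+4))`. -/
theorem stmt6 (k : ℕ) (hk : 2 ≤ k) :
    ∃ j : ℝ, 0 < j ∧
      ∀ x : ℝ, 0 ≤ x →
        (∫ h in Ioo (0 : ℝ) x,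
            ((x - h) ^ ((1 : ℝ) / k) / (1 + (x - h) ^ 2)) *
              (h ^ ((1 : ℝ) / k) / (1 + h ^ 2)) * (1 / (h * (x - h))))
          ≤ j / (x ^ (1 - 2 / (k : ℝ)) * (x ^ 2 + 4)) := by
  have hk₀ : (0 : ℝ) < k := by positivity
  have hp₀ : (0 : ℝ) < 1 / k := by positivity
  have hp₁ : (1 : ℝ) / k ≤ 1 := by
    rw [div_le_one hk₀]
    exact_mod_cast (by omega : 1 ≤ k)
  refine ⟨16 * k, by positivity, fun x hx => ?_⟩
  rcases hx.eq_or_lt with rfl | hx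
  · simp only [Ioo_self, Measure.restrict_empty, integral_zero_measure]
    positivity
  rw [setIntegral_congr_fun measurableSet_Ioo fun h hh =>
    rpow_div_mul_rpow_div_eq_powWeight_mul (sub_pos.2 hh.2) hh.1]
  calc _ ≤ powWeight (1 / k) (x / 2) * (2 * x ^ (1 / (k : ℝ)) / (1 / k)) :=
        integral_powWeight_sub_mul_powWeight_le hp₀ hp₁ hx.le
    _ ≤ 16 / (1 / k) / (x ^ (1 - 2 * (1 / (k : ℝ))) * (x ^ 2 + 4)) :=
        powWeight_half_mul_le hp₀ hx
    _ = 16 * k / (x ^ (1 - 2 / (k : ℝ)) * (x ^ 2 + 4)) := by field_simp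
end

section
/- There exists a constant j₁ > 0 such that for all x ≥ 0, ∫₀^∞ dh / ((1+(x-h)²)(1+h²)) ≤ j₁ / (x² + 1). -/
open MeasureTheory Real Set

/-!
Since `(a + b)² ≤ 2a² + 2b²`, the product `(1 + a²)(1 + b²)` of two Cauchy weights is controlled by
`(1 + (a + b)²) / 2` times their sum. Taking `a = x - h`, `b = h`, the integrand is bounded by
`2 / (1 + x²)` times the sum of two translated Cauchy densities, each of integral `π` over the line.
-/

lemma inv_mul_inv_one_add_sq_le (a b : ℝ) :
    ((1 + a ^ 2) * (1 + b ^ 2))⁻¹ ≤ 2 / (1 + (a + b) ^ 2) * ((1 + a ^ 2)⁻¹ + (1 + b ^ 2)⁻¹) := by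
  have hC : 0 < 1 + (a + b) ^ 2 := by positivity
  have key : 1 + (a + b) ^ 2 ≤ 2 * ((1 + a ^ 2) + (1 + b ^ 2)) := by nlinarith [sq_nonneg (a - b)]
  calc ((1 + a ^ 2) * (1 + b ^ 2))⁻¹
      = (1 + (a + b) ^ 2) / (1 + (a + b) ^ 2) / ((1 + a ^ 2) * (1 + b ^ 2)) := by
        rw [div_self hC.ne', one_div]
    _ ≤ 2 * ((1 + a ^ 2) + (1 + b ^ 2)) / (1 + (a + b) ^ 2) / ((1 + a ^ 2) * (1 + b ^ 2)) := by
        gcongr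
    _ = 2 / (1 + (a + b) ^ 2) * ((1 + a ^ 2)⁻¹ + (1 + b ^ 2)⁻¹) := by
        field_simp; ring

lemma integrable_inv_one_add_sq_sub (x : ℝ) : Integrable fun h : ℝ => (1 + (x - h) ^ 2)⁻¹ :=
  integrable_inv_one_add_sq.comp_sub_left x

lemma integral_inv_one_add_sq_sub (x : ℝ) : ∫ h : ℝ, (1 + (x - h) ^ 2)⁻¹ = π := by
  rw [integral_sub_left_eq_self (fun u : ℝ => (1 + u ^ 2)⁻¹), integral_univ_inv_one_add_sq]

lemma integral_inv_mul_inv_one_add_sq_le (x : ℝ) (s : Set ℝ) :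
    ∫ h in s, ((1 + (x - h) ^ 2) * (1 + h ^ 2))⁻¹ ≤ 4 * π / (1 + x ^ 2) := by
  have bound : ∀ h : ℝ, ((1 + (x - h) ^ 2) * (1 + h ^ 2))⁻¹
      ≤ 2 / (1 + x ^ 2) * ((1 + (x - h) ^ 2)⁻¹ + (1 + h ^ 2)⁻¹) := fun h => by
    simpa using inv_mul_inv_one_add_sq_le (x - h) h
  have hg : Integrable fun h : ℝ => 2 / (1 + x ^ 2) * ((1 + (x - h) ^ 2)⁻¹ + (1 + h ^ 2)⁻¹) :=
    ((integrable_inv_one_add_sq_sub x).add integrable_inv_one_add_sq).const_mul _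
  have hf : Integrable fun h : ℝ => ((1 + (x - h) ^ 2) * (1 + h ^ 2))⁻¹ :=
    hg.mono' (by fun_prop) (.of_forall fun h => by
      rw [norm_of_nonneg (by positivity)]; exact bound h)
  calc ∫ h in s, ((1 + (x - h) ^ 2) * (1 + h ^ 2))⁻¹
      ≤ ∫ h : ℝ, ((1 + (x - h) ^ 2) * (1 + h ^ 2))⁻¹ :=
        setIntegral_le_integral hf (.of_forall fun h => by positivity)
    _ ≤ _ := integral_mono hf hg bound
    _ = 4 * π / (1 + x ^ 2) := by
        rw [integral_const_mul, integral_add (integrable_inv_one_add_sq_sub x)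
          integrable_inv_one_add_sq, integral_inv_one_add_sq_sub, integral_univ_inv_one_add_sq]
        ring

/-- There exists `j₁ > 0` such that for all `x ≥ 0`,
`∫₀^∞ dh/((1+(x-h)²)(1+h²)) ≤ j₁/(x²+1)`. -/
theorem stmt7 :
    ∃ j : ℝ, 0 < j ∧
      ∀ x : ℝ, 0 ≤ x →
        (∫ h in Ioi (0 : ℝ), 1 / ((1 + (x - h) ^ 2) * (1 + h ^ 2)))
          ≤ j / (x ^ 2 + 1) := by
  refine ⟨4 * π, by positivity, fun x _ => ?_⟩
  simpa only [one_div, add_comm (x ^ 2)] using integral_inv_mul_inv_one_add_sq_le x (Ioi 0)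
end

section
/- Let k₂ ≥ 1 be an integer, ν₂ > 0, and 1/k₂ ≤ γ₂ ≤ 1. Then there exists C₂ > 0 such that for all ε > 0 and all continuous g : [0,∞) → [0,∞), sup_{t > 0} (1+t²/ε^{2k₂})/( t^{1/k₂}/ε ) · e^{-ν₂ t/ε^{k₂}} ∫₀ᵗ (t-s)^{γ₂} · ( (s^{1/k₂}/ε)/(1+s²/ε^{2k₂}) ) · e^{ν₂ s/ε^{k₂}} · ds/s ≤ C₂ ε^{k₂ γ₂}. -/
open MeasureTheory Real Set

lemma aux_rpow_exp (m : ℝ) (hm : 0 < m) (x : ℝ) (hx : 0 ≤ x) :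
    x ^ m * Real.exp (-x) ≤ m ^ m := by
  rcases le_or_gt x m with h | h
  · calc x ^ m * Real.exp (-x) ≤ x ^ m * 1 := by
          have := Real.exp_le_one_iff.mpr (by linarith [hx] : -x ≤ 0)
          have hxm : (0:ℝ) ≤ x ^ m := Real.rpow_nonneg hx m
          nlinarith
    _ = x ^ m := mul_one _
    _ ≤ m ^ m := Real.rpow_le_rpow hx h hm.le
  · have hx0 : 0 < x := hm.trans h
    have h1 : Real.log (x / m) ≤ x / m - 1 := Real.log_le_sub_one_of_pos (by positivity)
    rw [Real.log_div hx0.ne' hm.ne'] at h1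
    have h2 : Real.log x * m - x ≤ Real.log m * m := by
      have := mul_le_mul_of_nonneg_left h1 hm.le
      rw [mul_sub] at this
      have hxm : m * (x / m - 1) = x - m := by field_simp
      nlinarith
    calc x ^ m * Real.exp (-x) = Real.exp (Real.log x * m) * Real.exp (-x) := by
          rw [Real.rpow_def_of_pos hx0]
      _ = Real.exp (Real.log x * m - x) := by rw [← Real.exp_add]; ring_nf
      _ ≤ Real.exp (Real.log m * m) := Real.exp_le_exp.mpr h2
      _ = m ^ m := (Real.rpow_def_of_pos hm m).symm

lemma aux_rpow_exp' (m c r : ℝ) (hm : 0 < m) (hc : 0 < c) (hr : 0 ≤ r) :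
    r ^ m * Real.exp (-(c * r)) ≤ m ^ m / c ^ m := by
  have h := aux_rpow_exp m hm (c * r) (by positivity)
  rw [Real.mul_rpow hc.le hr] at h
  rw [le_div_iff₀ (Real.rpow_pos_of_pos hc m)]
  nlinarith [Real.rpow_nonneg hr m, Real.exp_pos (-(c*r))]

/-- Scalar estimate behind the norm bound for the truncated Laplace-type convolution
operator: for an integer `k₂ ≥ 1`, `ν₂ > 0` and `1/k₂ ≤ γ₂ ≤ 1`, there exists `C₂ > 0`
such that for all `ε > 0` (and any continuous nonnegative `g` on `[0,∞)`),
`sup_{t>0} ((1+t²/ε^{2k₂})/(t^{1/k₂}/ε)) e^{-ν₂ t/ε^{k₂}}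
  ∫₀ᵗ (t-s)^{γ₂} ((s^{1/k₂}/ε)/(1+s²/ε^{2k₂})) e^{ν₂ s/ε^{k₂}} ds/s ≤ C₂ ε^{k₂ γ₂}`. -/
theorem stmt8 (k₂ : ℕ) (hk₂ : 1 ≤ k₂) (ν₂ : ℝ) (hν₂ : 0 < ν₂) (γ₂ : ℝ)
    (hγ₂l : 1 / (k₂ : ℝ) ≤ γ₂) (hγ₂u : γ₂ ≤ 1) :
    ∃ C₂ : ℝ, 0 < C₂ ∧
      ∀ ε : ℝ, 0 < ε →
        ∀ g : ℝ → ℝ, ContinuousOn g (Ici 0) → (∀ s ∈ Ici (0 : ℝ), 0 ≤ g s) →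
          ∀ t : ℝ, 0 < t →
            ((1 + t ^ 2 / ε ^ (2 * k₂)) / (t ^ ((1 : ℝ) / k₂) / ε)) *
                Real.exp (-(ν₂ * t / ε ^ k₂)) *
                ∫ s in Ioo (0 : ℝ) t,
                  (t - s) ^ γ₂ *
                    ((s ^ ((1 : ℝ) / k₂) / ε) / (1 + s ^ 2 / ε ^ (2 * k₂))) *
                    Real.exp (ν₂ * s / ε ^ k₂) * (1 / s)
              ≤ C₂ * ε ^ ((k₂ : ℝ) * γ₂) := by
  have hkR : (0:ℝ) < (k₂ : ℝ) := by exact_mod_cast hk₂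
  have hγ0 : 0 < γ₂ := lt_of_lt_of_le (by positivity) hγ₂l
  set M₀ : ℝ := γ₂ ^ γ₂ / ν₂ ^ γ₂ + (γ₂ + 2) ^ (γ₂ + 2) / ν₂ ^ (γ₂ + 2) with hM₀
  have hM₀pos : 0 < M₀ := by
    have h1 : 0 < γ₂ ^ γ₂ := Real.rpow_pos_of_pos hγ0 _
    have h2 : 0 < ν₂ ^ γ₂ := Real.rpow_pos_of_pos hν₂ _
    have h3 : 0 < (γ₂ + 2) ^ (γ₂ + 2) := Real.rpow_pos_of_pos (by linarith) _
    have h4 : 0 < ν₂ ^ (γ₂ + 2) := Real.rpow_pos_of_pos hν₂ _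
    positivity
  refine ⟨2 * k₂ * M₀, by positivity, ?_⟩
  intro ε hε g hg hg' t ht
  set p : ℝ := (1 : ℝ) / (k₂ : ℝ) with hpdef
  have hp : 0 < p := by positivity
  set b : ℝ := ε ^ k₂ with hbdef
  have hb : 0 < b := by positivity
  have hE : ε ^ (2 * k₂) = b ^ 2 := by rw [hbdef, mul_comm, pow_mul]
  have hεb : ε ^ ((k₂ : ℝ) * γ₂) = b ^ γ₂ := by
    rw [hbdef, ← Real.rpow_natCast ε k₂, ← Real.rpow_mul hε.le]
  rw [hE, hεb]
  by_cases hInt : IntegrableOn (fun s =>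
      (t - s) ^ γ₂ * ((s ^ p / ε) / (1 + s ^ 2 / b ^ 2)) *
        Real.exp (ν₂ * s / b) * (1 / s)) (Ioo (0:ℝ) t) volume
  case neg =>
    rw [MeasureTheory.integral_undef hInt, mul_zero]
    have : 0 < b ^ γ₂ := Real.rpow_pos_of_pos hb _
    positivity
  case pos =>
  set A : ℝ := (1 + t ^ 2 / b ^ 2) / (t ^ p / ε) * Real.exp (-(ν₂ * t / b)) with hAdef
  set D : ℝ := 2 * M₀ * b ^ γ₂ / t ^ p with hDdef
  have htp : 0 < t ^ p := Real.rpow_pos_of_pos ht _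
  have hApos : 0 ≤ A := by
    have : 0 < (1 + t ^ 2 / b ^ 2) / (t ^ p / ε) := by positivity
    positivity
  rw [← MeasureTheory.integral_const_mul]
  have hbound : ∀ s ∈ Ioo (0:ℝ) t,
      A * ((t - s) ^ γ₂ * ((s ^ p / ε) / (1 + s ^ 2 / b ^ 2)) *
        Real.exp (ν₂ * s / b) * (1 / s)) ≤ D * s ^ (p - 1) := by
    intro s hs
    obtain ⟨hs0, hst⟩ := hs
    have hr : 0 < t - s := by linarith
    have hden : (0:ℝ) < 1 + s ^ 2 / b ^ 2 := by positivity
    -- key scalar bound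
    have hratio : (1 + t ^ 2 / b ^ 2) / (1 + s ^ 2 / b ^ 2) ≤
        2 * (1 + (t - s) ^ 2 / b ^ 2) := by
      rw [div_le_iff₀ hden]
      have e : ∀ x : ℝ, x ^ 2 / b ^ 2 = (x / b) ^ 2 := fun x => (div_pow x b 2).symm
      rw [e t, e s, e (t - s)]
      have htb : t / b = s / b + (t - s) / b := by ring
      rw [htb]
      nlinarith [sq_nonneg (s / b - (t - s) / b), sq_nonneg (s / b * ((t - s) / b))]
    have hK : (1 + (t - s) ^ 2 / b ^ 2) *
        ((t - s) ^ γ₂ * Real.exp (-(ν₂ / b * (t - s)))) ≤ M₀ * b ^ γ₂ := by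
      have hc : 0 < ν₂ / b := by positivity
      have hA1 := aux_rpow_exp' γ₂ (ν₂ / b) (t - s) hγ0 hc hr.le
      have hA2 := aux_rpow_exp' (γ₂ + 2) (ν₂ / b) (t - s) (by linarith) hc hr.le
      have hcg : (ν₂ / b) ^ γ₂ = ν₂ ^ γ₂ / b ^ γ₂ := Real.div_rpow hν₂.le hb.le γ₂
      have hcg2 : (ν₂ / b) ^ (γ₂ + 2) = ν₂ ^ (γ₂ + 2) / b ^ (γ₂ + 2) :=
        Real.div_rpow hν₂.le hb.le (γ₂ + 2)
      have hbsplit : b ^ (γ₂ + 2) = b ^ γ₂ * b ^ 2 := by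
        rw [Real.rpow_add hb, Real.rpow_two]
      have hrsplit : (t - s) ^ (γ₂ + 2) = (t - s) ^ γ₂ * (t - s) ^ 2 := by
        rw [Real.rpow_add hr, Real.rpow_two]
      rw [hcg] at hA1
      rw [hcg2, hbsplit] at hA2
      rw [hrsplit] at hA2
      have hbg : 0 < b ^ γ₂ := Real.rpow_pos_of_pos hb _
      have hng : 0 < ν₂ ^ γ₂ := Real.rpow_pos_of_pos hν₂ _
      have hng2 : 0 < ν₂ ^ (γ₂ + 2) := Real.rpow_pos_of_pos hν₂ _
      have hb2 : (0:ℝ) < b ^ 2 := by positivity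
      have e1 : (t - s) ^ γ₂ * Real.exp (-(ν₂ / b * (t - s))) ≤
          γ₂ ^ γ₂ / ν₂ ^ γ₂ * b ^ γ₂ := by
        calc (t - s) ^ γ₂ * Real.exp (-(ν₂ / b * (t - s)))
            ≤ γ₂ ^ γ₂ / (ν₂ ^ γ₂ / b ^ γ₂) := hA1
          _ = γ₂ ^ γ₂ / ν₂ ^ γ₂ * b ^ γ₂ := by field_simp
      have e2 : (t - s) ^ 2 / b ^ 2 * ((t - s) ^ γ₂ * Real.exp (-(ν₂ / b * (t - s)))) ≤
          (γ₂ + 2) ^ (γ₂ + 2) / ν₂ ^ (γ₂ + 2) * b ^ γ₂ := by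
        have h5 : (t - s) ^ γ₂ * (t - s) ^ 2 * Real.exp (-(ν₂ / b * (t - s))) ≤
            (γ₂ + 2) ^ (γ₂ + 2) / (ν₂ ^ (γ₂ + 2) / (b ^ γ₂ * b ^ 2)) := hA2
        have hQ : (γ₂ + 2) ^ (γ₂ + 2) / (ν₂ ^ (γ₂ + 2) / (b ^ γ₂ * b ^ 2)) / b ^ 2 =
            (γ₂ + 2) ^ (γ₂ + 2) / ν₂ ^ (γ₂ + 2) * b ^ γ₂ := by
          field_simp
        calc (t - s) ^ 2 / b ^ 2 * ((t - s) ^ γ₂ * Real.exp (-(ν₂ / b * (t - s))))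
            = ((t - s) ^ γ₂ * (t - s) ^ 2 * Real.exp (-(ν₂ / b * (t - s)))) / b ^ 2 := by
              ring
          _ ≤ (γ₂ + 2) ^ (γ₂ + 2) / (ν₂ ^ (γ₂ + 2) / (b ^ γ₂ * b ^ 2)) / b ^ 2 := by
              gcongr
          _ = (γ₂ + 2) ^ (γ₂ + 2) / ν₂ ^ (γ₂ + 2) * b ^ γ₂ := hQ
      calc (1 + (t - s) ^ 2 / b ^ 2) * ((t - s) ^ γ₂ * Real.exp (-(ν₂ / b * (t - s))))
          = (t - s) ^ γ₂ * Real.exp (-(ν₂ / b * (t - s))) +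
            (t - s) ^ 2 / b ^ 2 * ((t - s) ^ γ₂ * Real.exp (-(ν₂ / b * (t - s)))) := by ring
        _ ≤ γ₂ ^ γ₂ / ν₂ ^ γ₂ * b ^ γ₂ +
            (γ₂ + 2) ^ (γ₂ + 2) / ν₂ ^ (γ₂ + 2) * b ^ γ₂ := add_le_add e1 e2
        _ = M₀ * b ^ γ₂ := by rw [hM₀]; ring
    have hKfull : (1 + t ^ 2 / b ^ 2) / (1 + s ^ 2 / b ^ 2) *
        ((t - s) ^ γ₂ * Real.exp (-(ν₂ / b * (t - s)))) ≤ 2 * M₀ * b ^ γ₂ := by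
      have hnn : 0 ≤ (t - s) ^ γ₂ * Real.exp (-(ν₂ / b * (t - s))) := by positivity
      calc (1 + t ^ 2 / b ^ 2) / (1 + s ^ 2 / b ^ 2) *
            ((t - s) ^ γ₂ * Real.exp (-(ν₂ / b * (t - s))))
          ≤ 2 * (1 + (t - s) ^ 2 / b ^ 2) *
            ((t - s) ^ γ₂ * Real.exp (-(ν₂ / b * (t - s)))) :=
            mul_le_mul_of_nonneg_right hratio hnn
        _ = 2 * ((1 + (t - s) ^ 2 / b ^ 2) *
            ((t - s) ^ γ₂ * Real.exp (-(ν₂ / b * (t - s))))) := by ring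
        _ ≤ 2 * (M₀ * b ^ γ₂) := by linarith [hK]
        _ = 2 * M₀ * b ^ γ₂ := by ring
    -- now rewrite LHS as (ratio * stuff) * (s^(p-1)/t^p)
    have hexp : Real.exp (-(ν₂ * t / b)) * Real.exp (ν₂ * s / b) =
        Real.exp (-(ν₂ / b * (t - s))) := by
      rw [← Real.exp_add]; ring_nf
    have hsp : s ^ (p - 1) = s ^ p / s := by
      rw [Real.rpow_sub hs0, Real.rpow_one]
    have heq : A * ((t - s) ^ γ₂ * ((s ^ p / ε) / (1 + s ^ 2 / b ^ 2)) *
        Real.exp (ν₂ * s / b) * (1 / s)) =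
        ((1 + t ^ 2 / b ^ 2) / (1 + s ^ 2 / b ^ 2) *
          ((t - s) ^ γ₂ * (Real.exp (-(ν₂ * t / b)) * Real.exp (ν₂ * s / b)))) *
          (s ^ p / s / t ^ p) := by
      rw [hAdef]; field_simp
    rw [heq, hexp, ← hsp, hDdef]
    have hfrac : 0 ≤ s ^ (p - 1) / t ^ p := by positivity
    calc ((1 + t ^ 2 / b ^ 2) / (1 + s ^ 2 / b ^ 2) *
          ((t - s) ^ γ₂ * Real.exp (-(ν₂ / b * (t - s))))) * (s ^ (p - 1) / t ^ p)
        ≤ (2 * M₀ * b ^ γ₂) * (s ^ (p - 1) / t ^ p) :=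
          mul_le_mul_of_nonneg_right hKfull hfrac
      _ = 2 * M₀ * b ^ γ₂ / t ^ p * s ^ (p - 1) := by ring
  have hIntRHS : IntegrableOn (fun s => D * s ^ (p - 1)) (Ioo (0:ℝ) t) volume := by
    have h1 : IntervalIntegrable (fun s : ℝ => s ^ (p - 1)) volume 0 t :=
      intervalIntegral.intervalIntegrable_rpow' (by linarith)
    have h2 : IntegrableOn (fun s : ℝ => s ^ (p - 1)) (Ioc (0:ℝ) t) volume :=
      (intervalIntegrable_iff_integrableOn_Ioc_of_le ht.le).mp h1
    exact (h2.mono_set Ioo_subset_Ioc_self).const_mul D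
  calc ∫ s in Ioo (0:ℝ) t,
        A * ((t - s) ^ γ₂ * ((s ^ p / ε) / (1 + s ^ 2 / b ^ 2)) *
          Real.exp (ν₂ * s / b) * (1 / s))
      ≤ ∫ s in Ioo (0:ℝ) t, D * s ^ (p - 1) :=
        setIntegral_mono_on (hInt.const_mul A) hIntRHS measurableSet_Ioo hbound
    _ ≤ 2 * ↑k₂ * M₀ * b ^ γ₂ := by
        rw [MeasureTheory.integral_const_mul, ← MeasureTheory.integral_Ioc_eq_integral_Ioo,
          ← intervalIntegral.integral_of_le ht.le,
          integral_rpow (Or.inl (by linarith : (-1:ℝ) < p - 1))]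
        have hpp : p - 1 + 1 = p := by ring
        rw [hpp, Real.zero_rpow hp.ne', sub_zero, hDdef]
        apply le_of_eq
        rw [hpdef]
        field_simp
end

section
/- Let k₁, k₂ ≥ 1 be integers and F_{n₁,n₂} complex numbers (n₁, n₂ ≥ 1) satisfying |F_{n₁,n₂}| ≤ K₀ T₀^{−(n₁+n₂)} for some K₀, T₀ > 0. Then the double series ψ(τ₁, τ₂) = Σ_{n₁,n₂ ≥ 1} F_{n₁,n₂} τ₁^{n₁} τ₂^{n₂} / (Γ(n₁/k₁) Γ(n₂/k₂)) defines an entire function on ℂ², and there exist C, ν₁, ν₂ > 0 such that |ψ(τ₁,τ₂)| ≤ C |τ₁| |τ₂| exp(ν₁ |τ₁|^{k₁} + ν₂ |τ₂|^{k₂}) for all (τ₁,τ₂) ∈ ℂ². -/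
/-!
Since `Γ` increases on `[2, ∞)` and `Γ (t + 2) = (t + 1) t Γ t`, we get `q! ≤ (q + 2) Γ t`
whenever `q ≤ t ≤ q + 1`. Taking `q = n / k` bounds `x ^ n / Γ ((n + 1) / k)` by
`2 (1 + x ^ k) (2 x ^ k) ^ q / q!`, and as every `q` occurs for exactly `k` values of `n`,
`∑ₙ x ^ n / Γ ((n + 1) / k) ≤ 2 k exp (3 x ^ k)`. The Borel coefficients are dominated by
a product of two such series, so `ψ τ = τ₁ τ₂ ∑ c_p τ₁ ^ p₁ τ₂ ^ p₂` is a double power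
series converging normally on every ball: it is holomorphic by termwise differentiation
and inherits the exponential bound.
-/

open scoped Nat

theorem factorial_le_mul_Gamma {m : ℕ} {t : ℝ} (ht : 0 < t) (hmt : m ≤ t) (htm : t ≤ m + 1) :
    (m ! : ℝ) ≤ (m + 2) * Real.Gamma t := by
  have hmono : ((m + 1)! : ℝ) ≤ Real.Gamma (t + 2) := by
    rw [← Real.Gamma_nat_eq_factorial]
    push_cast
    exact Real.Gamma_strictMonoOn_Ici.monotoneOn (by simp; linarith) (by simp; linarith)
      (by linarith)
  have hrec : Real.Gamma (t + 2) = (t + 1) * t * Real.Gamma t := by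
    rw [show t + 2 = t + 1 + 1 by ring, Real.Gamma_add_one (by positivity),
      Real.Gamma_add_one ht.ne', mul_assoc]
  rw [Nat.factorial_succ, hrec] at hmono
  push_cast at hmono
  have hΓ := Real.Gamma_pos_of_pos ht
  have hpoly : (t + 1) * t ≤ (m + 2) * (m + 1) := by nlinarith
  nlinarith [mul_le_mul_of_nonneg_right hpoly hΓ.le]

theorem pow_le_one_add_pow {x : ℝ} (hx : 0 ≤ x) {r k : ℕ} (hrk : r ≤ k) : x ^ r ≤ 1 + x ^ k := by
  rcases le_total x 1 with h | h
  · linarith [pow_le_one₀ hx h (n := r), pow_nonneg hx k]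
  · linarith [pow_le_pow_right₀ h hrk]

theorem pow_div_Gamma_le {k : ℕ} (hk : 0 < k) {x : ℝ} (hx : 0 ≤ x) (n : ℕ) :
    x ^ n / Real.Gamma ((n + 1) / k) ≤
      2 * (1 + x ^ k) * ((2 * x ^ k) ^ (n / k) / (n / k)!) := by
  set q := n / k
  have hkR : (0 : ℝ) < k := by exact_mod_cast hk
  have hqt : (q : ℝ) ≤ (n + 1) / k := by
    rw [le_div_iff₀ hkR]
    exact_mod_cast (Nat.div_mul_le_self n k).trans n.le_succ
  have htq : ((n : ℝ) + 1) / k ≤ q + 1 := by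
    rw [div_le_iff₀ hkR]
    exact_mod_cast (Nat.lt_mul_div_succ n hk).trans_eq (mul_comm _ _)
  have hΓ := factorial_le_mul_Gamma (by positivity) hqt htq
  have hΓpos : 0 < Real.Gamma ((n + 1) / k) := Real.Gamma_pos_of_pos (by positivity)
  have hpow : x ^ n ≤ (1 + x ^ k) * (x ^ k) ^ q := by
    conv_lhs => rw [← Nat.div_add_mod n k, pow_add, pow_mul]
    rw [mul_comm]
    exact mul_le_mul_of_nonneg_right (pow_le_one_add_pow hx (Nat.mod_lt n hk).le) (by positivity)
  have htwo : (q : ℝ) + 2 ≤ 2 * 2 ^ q := by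
    have := Nat.lt_two_pow_self (n := q + 1)
    rw [pow_succ] at this
    exact_mod_cast (by omega : q + 2 ≤ 2 * 2 ^ q)
  rw [div_le_iff₀ hΓpos]
  calc x ^ n ≤ (1 + x ^ k) * (x ^ k) ^ q := hpow
    _ = (1 + x ^ k) * ((x ^ k) ^ q / q !) * q ! := by field_simp
    _ ≤ (1 + x ^ k) * ((x ^ k) ^ q / q !) * ((q + 2) * Real.Gamma ((n + 1) / k)) := by gcongr
    _ ≤ (1 + x ^ k) * ((x ^ k) ^ q / q !) * (2 * 2 ^ q * Real.Gamma ((n + 1) / k)) := by gcongr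
    _ = _ := by rw [mul_pow]; ring

theorem hasSum_comp_div_of_nonneg {g : ℕ → ℝ} {a : ℝ} (hg0 : 0 ≤ g) (hg : HasSum g a) {k : ℕ}
    (hk : 0 < k) :
    HasSum (fun n => g (n / k)) (k * a) := by
  have : NeZero k := ⟨hk.ne'⟩
  have hprod : HasSum (fun p : ℕ × Fin k => g p.1 * 1) (a * k) := by
    refine hg.mul (by simpa using hasSum_fintype (fun _ : Fin k => (1 : ℝ))) ?_
    refine summable_mul_of_summable_norm (f := g) (g := fun _ : Fin k => (1 : ℝ)) ?_ .of_finite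
    simpa [Real.norm_eq_abs, abs_of_nonneg (hg0 _)] using hg.summable
  rw [mul_comm]
  simpa [Function.comp_def] using (Nat.divModEquiv k).hasSum_iff.mpr hprod

theorem hasSum_majorant_pow_div_Gamma {k : ℕ} (hk : 0 < k) {x : ℝ} (hx : 0 ≤ x) :
    HasSum (fun n => 2 * (1 + x ^ k) * ((2 * x ^ k) ^ (n / k) / (n / k)!))
      (k * (2 * (1 + x ^ k) * Real.exp (2 * x ^ k))) := by
  refine hasSum_comp_div_of_nonneg (g := fun q => 2 * (1 + x ^ k) * ((2 * x ^ k) ^ q / q !))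
    (fun q => by positivity) ?_ hk
  rw [Real.exp_eq_exp_ℝ]
  exact (NormedSpace.expSeries_div_hasSum_exp (2 * x ^ k)).mul_left _

theorem summable_pow_div_Gamma {k : ℕ} (hk : 0 < k) {x : ℝ} (hx : 0 ≤ x) :
    Summable fun n : ℕ => x ^ n / Real.Gamma ((n + 1) / k) :=
  (hasSum_majorant_pow_div_Gamma hk hx).summable.of_nonneg_of_le
    (fun n => div_nonneg (by positivity) (Real.Gamma_pos_of_pos (by positivity)).le)
    (pow_div_Gamma_le hk hx)

theorem tsum_pow_div_Gamma_le {k : ℕ} (hk : 0 < k) {x : ℝ} (hx : 0 ≤ x) :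
    ∑' n : ℕ, x ^ n / Real.Gamma ((n + 1) / k) ≤ 2 * k * Real.exp (3 * x ^ k) := by
  refine (hasSum_le (pow_div_Gamma_le hk hx) (summable_pow_div_Gamma hk hx).hasSum
    (hasSum_majorant_pow_div_Gamma hk hx)).trans ?_
  have h := Real.add_one_le_exp (x ^ k)
  have hexp : Real.exp (3 * x ^ k) = Real.exp (x ^ k) * Real.exp (2 * x ^ k) := by
    rw [← Real.exp_add]; ring_nf
  rw [hexp]
  have : (0 : ℝ) ≤ k * Real.exp (2 * x ^ k) := by positivity
  nlinarith

section DoublePowerSeries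

variable {𝕜 : Type*} [RCLike 𝕜]

theorem norm_fst_pow_mul_snd_pow_le (z : 𝕜 × 𝕜) (m n : ℕ) :
    ‖z.1 ^ m * z.2 ^ n‖ ≤ ‖z‖ ^ (m + n) := by
  rw [norm_mul, norm_pow, norm_pow, pow_add]
  gcongr
  exacts [norm_fst_le z, norm_snd_le z]

theorem hasFDerivAt_fst_pow_mul_snd_pow (m n : ℕ) (z : 𝕜 × 𝕜) :
    HasFDerivAt (fun w : 𝕜 × 𝕜 => w.1 ^ m * w.2 ^ n)
      (z.1 ^ m • (n • z.2 ^ (n - 1)) • ContinuousLinearMap.snd 𝕜 𝕜 𝕜 +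
        z.2 ^ n • (m • z.1 ^ (m - 1)) • ContinuousLinearMap.fst 𝕜 𝕜 𝕜) z :=
  ((hasFDerivAt_fst (p := z) (𝕜 := 𝕜)).pow m).mul ((hasFDerivAt_snd (p := z) (𝕜 := 𝕜)).pow n)

theorem norm_fderiv_fst_pow_mul_snd_pow_le (m n : ℕ) {z : 𝕜 × 𝕜} {R : ℝ} (hR : 1 ≤ R)
    (hz : ‖z‖ ≤ R) :
    ‖fderiv 𝕜 (fun w : 𝕜 × 𝕜 => w.1 ^ m * w.2 ^ n) z‖ ≤ (m + n) * R ^ (m + n) := by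
  have h1 : ‖z.1‖ ≤ R := (norm_fst_le z).trans hz
  have h2 : ‖z.2‖ ≤ R := (norm_snd_le z).trans hz
  have hpow : ∀ {w : 𝕜}, ‖w‖ ≤ R → ∀ j, ‖w‖ ^ (j - 1) ≤ R ^ j := fun hw j =>
    (pow_le_pow_left₀ (norm_nonneg _) hw _).trans (pow_le_pow_right₀ hR (Nat.sub_le j 1))
  have hsmul : ∀ (a b : 𝕜) (L : 𝕜 × 𝕜 →L[𝕜] 𝕜), ‖L‖ ≤ 1 → ‖a • b • L‖ ≤ ‖a‖ * ‖b‖ :=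
    fun a b L hL => by
      rw [norm_smul, norm_smul]
      exact mul_le_mul_of_nonneg_left (mul_le_of_le_one_right (norm_nonneg _) hL) (norm_nonneg _)
  rw [(hasFDerivAt_fst_pow_mul_snd_pow m n z).fderiv]
  calc ‖z.1 ^ m • (n • z.2 ^ (n - 1)) • ContinuousLinearMap.snd 𝕜 𝕜 𝕜 +
        z.2 ^ n • (m • z.1 ^ (m - 1)) • ContinuousLinearMap.fst 𝕜 𝕜 𝕜‖
      ≤ ‖z.1 ^ m‖ * ‖n • z.2 ^ (n - 1)‖ + ‖z.2 ^ n‖ * ‖m • z.1 ^ (m - 1)‖ :=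
        (norm_add_le _ _).trans (add_le_add (hsmul _ _ _ (ContinuousLinearMap.norm_snd_le ..))
          (hsmul _ _ _ (ContinuousLinearMap.norm_fst_le ..)))
    _ ≤ R ^ m * (n * R ^ n) + R ^ n * (m * R ^ m) := by
        gcongr
        · exact (norm_pow _ _).trans_le (pow_le_pow_left₀ (norm_nonneg _) h1 m)
        · exact norm_nsmul_le.trans (by rw [norm_pow]; gcongr; exact hpow h2 n)
        · exact (norm_pow _ _).trans_le (pow_le_pow_left₀ (norm_nonneg _) h2 n)
        · exact norm_nsmul_le.trans (by rw [norm_pow]; gcongr; exact hpow h1 m)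
    _ = (m + n) * R ^ (m + n) := by ring

variable {c : ℕ × ℕ → 𝕜}

theorem summable_doublePowerSeries (hc : ∀ r, 0 ≤ r → Summable fun p => ‖c p‖ * r ^ (p.1 + p.2))
    (z : 𝕜 × 𝕜) : Summable fun p => c p * z.1 ^ p.1 * z.2 ^ p.2 :=
  (hc ‖z‖ (norm_nonneg z)).of_norm_bounded fun p => by
    rw [mul_assoc, norm_mul]
    exact mul_le_mul_of_nonneg_left (norm_fst_pow_mul_snd_pow_le z _ _) (norm_nonneg _)

theorem differentiable_doublePowerSeries
    (hc : ∀ r, 0 ≤ r → Summable fun p => ‖c p‖ * r ^ (p.1 + p.2)) :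
    Differentiable 𝕜 fun z : 𝕜 × 𝕜 => ∑' p, c p * z.1 ^ p.1 * z.2 ^ p.2 := by
  intro z₀
  set R := ‖z₀‖ + 1
  have hR : 1 ≤ R := by simp [R]
  have hderiv : ∀ p z, HasFDerivAt (fun w : 𝕜 × 𝕜 => c p * w.1 ^ p.1 * w.2 ^ p.2)
      (c p • fderiv 𝕜 (fun w : 𝕜 × 𝕜 => w.1 ^ p.1 * w.2 ^ p.2) z) z := fun p z => by
    simpa only [mul_assoc] using
      ((hasFDerivAt_fst_pow_mul_snd_pow p.1 p.2 z).differentiableAt.hasFDerivAt.const_mul (c p))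
  -- `(m + n) R ^ (m + n) ≤ (2 R) ^ (m + n)` puts the derivatives under the series at radius `2 R`
  have hbound : ∀ p, ∀ z ∈ Metric.ball (0 : 𝕜 × 𝕜) R,
      ‖c p • fderiv 𝕜 (fun w : 𝕜 × 𝕜 => w.1 ^ p.1 * w.2 ^ p.2) z‖ ≤
        ‖c p‖ * (2 * R) ^ (p.1 + p.2) := fun p z hz => by
    rw [Metric.mem_ball, dist_zero_right] at hz
    rw [norm_smul]
    refine mul_le_mul_of_nonneg_left ?_ (norm_nonneg _)
    refine (norm_fderiv_fst_pow_mul_snd_pow_le p.1 p.2 hR hz.le).trans ?_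
    rw [mul_pow]
    gcongr
    exact_mod_cast (Nat.lt_two_pow_self (n := p.1 + p.2)).le
  have hz₀ : z₀ ∈ Metric.ball (0 : 𝕜 × 𝕜) R := by simp [R]
  exact (hasFDerivAt_tsum_of_isPreconnected (hc (2 * R) (by positivity)) Metric.isOpen_ball
    (convex_ball 0 R).isPreconnected (fun p z _ => hderiv p z) hbound hz₀
    (summable_doublePowerSeries hc z₀) hz₀).differentiableAt

end DoublePowerSeries

theorem norm_Gamma_natCast_succ_div {k : ℕ} (hk : 0 < k) (n : ℕ) :
    ‖Complex.Gamma (((n + 1 : ℕ) : ℂ) / k)‖ = Real.Gamma ((n + 1) / k) := by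
  have hcast : ((n + 1 : ℕ) : ℂ) / k = (((n + 1 : ℝ) / k : ℝ) : ℂ) := by push_cast; rfl
  rw [hcast, Complex.Gamma_ofReal, Complex.norm_real,
    Real.norm_of_nonneg (Real.Gamma_pos_of_pos (by positivity)).le]

noncomputable def borelCoeff (k₁ k₂ : ℕ) (F : ℕ → ℕ → ℂ) (p : ℕ × ℕ) : ℂ :=
  F (p.1 + 1) (p.2 + 1) /
    (Complex.Gamma (((p.1 + 1 : ℕ) : ℂ) / k₁) * Complex.Gamma (((p.2 + 1 : ℕ) : ℂ) / k₂))

section BorelCoeff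

variable {k₁ k₂ : ℕ} {F : ℕ → ℕ → ℂ} {K₀ T₀ : ℝ}

theorem norm_borelCoeff_mul_pow_le (hk₁ : 0 < k₁) (hk₂ : 0 < k₂) (hT₀ : 0 < T₀)
    (hF : ∀ n₁ n₂ : ℕ, 1 ≤ n₁ → 1 ≤ n₂ → ‖F n₁ n₂‖ ≤ K₀ * T₀ ^ (-((n₁ : ℝ) + n₂)))
    {a b : ℝ} (ha : 0 ≤ a) (hb : 0 ≤ b) (p : ℕ × ℕ) :
    ‖borelCoeff k₁ k₂ F p‖ * a ^ p.1 * b ^ p.2 ≤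
      K₀ / T₀ ^ 2 * ((a / T₀) ^ p.1 / Real.Gamma ((p.1 + 1) / k₁) *
        ((b / T₀) ^ p.2 / Real.Gamma ((p.2 + 1) / k₂))) := by
  have hT : T₀ ^ (-(((p.1 + 1 : ℕ) : ℝ) + ((p.2 + 1 : ℕ) : ℝ))) =
      (T₀ ^ 2)⁻¹ * (T₀ ^ p.1)⁻¹ * (T₀ ^ p.2)⁻¹ := by
    rw [Real.rpow_neg hT₀.le, ← Nat.cast_add, Real.rpow_natCast,
      show p.1 + 1 + (p.2 + 1) = 2 + p.1 + p.2 by ring, pow_add, pow_add, mul_inv, mul_inv]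
  have hFp := hF (p.1 + 1) (p.2 + 1) (by omega) (by omega)
  rw [hT] at hFp
  have hΓ₁ := Real.Gamma_pos_of_pos (show (0 : ℝ) < (p.1 + 1) / k₁ by positivity)
  have hΓ₂ := Real.Gamma_pos_of_pos (show (0 : ℝ) < (p.2 + 1) / k₂ by positivity)
  rw [borelCoeff, norm_div, norm_mul, norm_Gamma_natCast_succ_div hk₁,
    norm_Gamma_natCast_succ_div hk₂]
  calc ‖F (p.1 + 1) (p.2 + 1)‖ / (Real.Gamma ((p.1 + 1) / k₁) * Real.Gamma ((p.2 + 1) / k₂)) *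
        a ^ p.1 * b ^ p.2
      ≤ K₀ * ((T₀ ^ 2)⁻¹ * (T₀ ^ p.1)⁻¹ * (T₀ ^ p.2)⁻¹) /
          (Real.Gamma ((p.1 + 1) / k₁) * Real.Gamma ((p.2 + 1) / k₂)) * a ^ p.1 * b ^ p.2 := by
        gcongr
    _ = _ := by rw [div_pow, div_pow]; field_simp

theorem summable_norm_borelCoeff_mul_pow (hk₁ : 0 < k₁) (hk₂ : 0 < k₂) (hT₀ : 0 < T₀)
    (hF : ∀ n₁ n₂ : ℕ, 1 ≤ n₁ → 1 ≤ n₂ → ‖F n₁ n₂‖ ≤ K₀ * T₀ ^ (-((n₁ : ℝ) + n₂)))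
    {a b : ℝ} (ha : 0 ≤ a) (hb : 0 ≤ b) :
    Summable fun p => ‖borelCoeff k₁ k₂ F p‖ * a ^ p.1 * b ^ p.2 :=
  (((summable_pow_div_Gamma hk₁ (by positivity : 0 ≤ a / T₀)).mul_of_nonneg
    (summable_pow_div_Gamma hk₂ (by positivity : 0 ≤ b / T₀))
    (fun n => div_nonneg (by positivity) (Real.Gamma_pos_of_pos (by positivity)).le)
    (fun n => div_nonneg (by positivity) (Real.Gamma_pos_of_pos (by positivity)).le)).mul_left
    (K₀ / T₀ ^ 2)).of_nonneg_of_le (fun p => by positivity)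
    (norm_borelCoeff_mul_pow_le hk₁ hk₂ hT₀ hF ha hb)

theorem tsum_norm_borelCoeff_mul_pow_le (hk₁ : 0 < k₁) (hk₂ : 0 < k₂) (hK₀ : 0 ≤ K₀)
    (hT₀ : 0 < T₀)
    (hF : ∀ n₁ n₂ : ℕ, 1 ≤ n₁ → 1 ≤ n₂ → ‖F n₁ n₂‖ ≤ K₀ * T₀ ^ (-((n₁ : ℝ) + n₂)))
    {a b : ℝ} (ha : 0 ≤ a) (hb : 0 ≤ b) :
    ∑' p, ‖borelCoeff k₁ k₂ F p‖ * a ^ p.1 * b ^ p.2 ≤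
      K₀ / T₀ ^ 2 * (2 * k₁ * Real.exp (3 * (a / T₀) ^ k₁)) *
        (2 * k₂ * Real.exp (3 * (b / T₀) ^ k₂)) := by
  have ha' : 0 ≤ a / T₀ := by positivity
  have hb' : 0 ≤ b / T₀ := by positivity
  have hu := summable_pow_div_Gamma hk₁ ha'
  have hv := summable_pow_div_Gamma hk₂ hb'
  have huv := hu.mul_of_nonneg hv
    (fun n => div_nonneg (by positivity) (Real.Gamma_pos_of_pos (by positivity)).le)
    (fun n => div_nonneg (by positivity) (Real.Gamma_pos_of_pos (by positivity)).le)
  calc ∑' p, ‖borelCoeff k₁ k₂ F p‖ * a ^ p.1 * b ^ p.2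
      ≤ ∑' p : ℕ × ℕ, K₀ / T₀ ^ 2 * ((a / T₀) ^ p.1 / Real.Gamma ((p.1 + 1) / k₁) *
          ((b / T₀) ^ p.2 / Real.Gamma ((p.2 + 1) / k₂))) :=
        (summable_norm_borelCoeff_mul_pow hk₁ hk₂ hT₀ hF ha hb).tsum_le_tsum
          (norm_borelCoeff_mul_pow_le hk₁ hk₂ hT₀ hF ha hb) (huv.mul_left _)
    _ = K₀ / T₀ ^ 2 * ((∑' n : ℕ, (a / T₀) ^ n / Real.Gamma ((n + 1) / k₁)) *
          ∑' n : ℕ, (b / T₀) ^ n / Real.Gamma ((n + 1) / k₂)) := by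
        rw [tsum_mul_left, hu.tsum_mul_tsum hv huv]
    _ ≤ _ := by
        rw [mul_assoc]
        gcongr
        exacts [tsum_pow_div_Gamma_le hk₁ ha', tsum_pow_div_Gamma_le hk₂ hb']

theorem norm_tsum_borelCoeff_mul_pow_le (hk₁ : 0 < k₁) (hk₂ : 0 < k₂) (hK₀ : 0 ≤ K₀)
    (hT₀ : 0 < T₀)
    (hF : ∀ n₁ n₂ : ℕ, 1 ≤ n₁ → 1 ≤ n₂ → ‖F n₁ n₂‖ ≤ K₀ * T₀ ^ (-((n₁ : ℝ) + n₂)))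
    (τ₁ τ₂ : ℂ) :
    ‖∑' p, borelCoeff k₁ k₂ F p * τ₁ ^ p.1 * τ₂ ^ p.2‖ ≤
      K₀ / T₀ ^ 2 * (2 * k₁) * (2 * k₂) *
        Real.exp (3 / T₀ ^ k₁ * ‖τ₁‖ ^ k₁ + 3 / T₀ ^ k₂ * ‖τ₂‖ ^ k₂) := by
  have hν : ∀ (x : ℝ) (k : ℕ), 3 * (x / T₀) ^ k = 3 / T₀ ^ k * x ^ k := fun x k => by
    rw [div_pow]; ring
  refine (tsum_of_norm_bounded (summable_norm_borelCoeff_mul_pow hk₁ hk₂ hT₀ hF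
    (norm_nonneg τ₁) (norm_nonneg τ₂)).hasSum fun p => ?_).trans
    ((tsum_norm_borelCoeff_mul_pow_le hk₁ hk₂ hK₀ hT₀ hF
      (norm_nonneg τ₁) (norm_nonneg τ₂)).trans_eq ?_)
  · rw [norm_mul, norm_mul, norm_pow, norm_pow]
  · rw [hν, hν, Real.exp_add]
    ring

end BorelCoeff

/-- The formal Borel transform of orders `(k₁,k₂)` of a double power series with
geometrically bounded coefficients defines an entire function on `ℂ²` with exponential
growth of order `(k₁,k₂)`: there is `ψ : ℂ × ℂ → ℂ`, entire, whose double power series is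
`Σ_{n₁,n₂ ≥ 1} F_{n₁,n₂} τ₁^{n₁} τ₂^{n₂} / (Γ(n₁/k₁)Γ(n₂/k₂))`, and constants
`C, ν₁, ν₂ > 0` with `|ψ(τ₁,τ₂)| ≤ C|τ₁||τ₂| exp(ν₁|τ₁|^{k₁} + ν₂|τ₂|^{k₂})`. -/
theorem stmt18 (k₁ k₂ : ℕ) (hk₁ : 1 ≤ k₁) (hk₂ : 1 ≤ k₂)
    (F : ℕ → ℕ → ℂ) (K₀ T₀ : ℝ) (hK₀ : 0 < K₀) (hT₀ : 0 < T₀)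
    (hF : ∀ n₁ n₂ : ℕ, 1 ≤ n₁ → 1 ≤ n₂ →
      ‖F n₁ n₂‖ ≤ K₀ * T₀ ^ (-((n₁ : ℝ) + n₂))) :
    ∃ ψ : ℂ × ℂ → ℂ, Differentiable ℂ ψ ∧
      (∀ τ₁ τ₂ : ℂ,
        HasSum
          (fun p : ℕ × ℕ =>
            F (p.1 + 1) (p.2 + 1) * τ₁ ^ (p.1 + 1) * τ₂ ^ (p.2 + 1) /
              (Complex.Gamma (((p.1 + 1 : ℕ) : ℂ) / (k₁ : ℂ)) *
                Complex.Gamma (((p.2 + 1 : ℕ) : ℂ) / (k₂ : ℂ))))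
          (ψ (τ₁, τ₂))) ∧
      ∃ C ν₁ ν₂ : ℝ, 0 < C ∧ 0 < ν₁ ∧ 0 < ν₂ ∧
        ∀ τ₁ τ₂ : ℂ,
          ‖ψ (τ₁, τ₂)‖ ≤
            C * ‖τ₁‖ * ‖τ₂‖ *
              Real.exp (ν₁ * ‖τ₁‖ ^ k₁ + ν₂ * ‖τ₂‖ ^ k₂) := by
  set c := borelCoeff k₁ k₂ F
  have hc : ∀ r : ℝ, 0 ≤ r → Summable fun p : ℕ × ℕ => ‖c p‖ * r ^ (p.1 + p.2) := fun r hr => by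
    simpa only [pow_add, mul_assoc] using summable_norm_borelCoeff_mul_pow hk₁ hk₂ hT₀ hF hr hr
  refine ⟨fun z => z.1 * z.2 * ∑' p, c p * z.1 ^ p.1 * z.2 ^ p.2,
    (differentiable_fst.mul differentiable_snd).mul (differentiable_doublePowerSeries hc),
    fun τ₁ τ₂ => ?_, K₀ / T₀ ^ 2 * (2 * k₁) * (2 * k₂), 3 / T₀ ^ k₁, 3 / T₀ ^ k₂,
    by positivity, by positivity, by positivity, fun τ₁ τ₂ => ?_⟩
  · refine ((summable_doublePowerSeries hc (τ₁, τ₂)).hasSum.mul_left (τ₁ * τ₂)).congr_fun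
      fun p => ?_
    simp only [c, borelCoeff]
    ring
  · rw [norm_mul, norm_mul]
    refine (mul_le_mul_of_nonneg_left
      (norm_tsum_borelCoeff_mul_pow_le hk₁ hk₂ hK₀.le hT₀ hF τ₁ τ₂) (by positivity)).trans_eq ?_
    ring
end
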